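/- arXiv:1511.07348 — 3 statements merged into one kernel-verified Lean document; each statement's English description precedes it below -/
import Mathlib

section
/- Let U ⊆ ℂ be open, let a ∈ ℂ and r > 0, and let f : U → ℂ be continuous on U and complex differentiable at every point of U \ {z ∈ ℂ : |z − a| = r}. Then f is complex differentiable at every point of U. -/
open Set Metric MeasureTheory

/-- A Euclidean circle: `{z : ℂ | |z - a| = r}` for some center `a` and radius `r > 0`. -/
def EuclideanCircle (S : Set ℂ) : Prop :=
  ∃ (a : ℂ) (r : ℝ), 0 < r ∧ S = {z : ℂ | ‖z - a‖ = r}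

/-- A Cantor set: a nonempty compact, perfect, totally disconnected subset of `ℂ`. -/
def IsCantorSet (S : Set ℂ) : Prop :=
  S.Nonempty ∧ IsCompact S ∧ Perfect S ∧ IsTotallyDisconnected S

/-- A compact set `E ⊆ ℂ` is conformally removable if every homeomorphism of `ℂ`
that is holomorphic off `E` is holomorphic everywhere. -/
def ConformallyRemovable (E : Set ℂ) : Prop :=
  ∀ f : ℂ ≃ₜ ℂ, (∀ z ∈ Eᶜ, DifferentiableAt ℂ f z) → ∀ z : ℂ, DifferentiableAt ℂ f z

/-- A planar-normalized circle domain: an open connected set with compact complement,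
each connected component of whose boundary is a Euclidean circle or a singleton. -/
def IsCircleDomain (Ω : Set ℂ) : Prop :=
  IsOpen Ω ∧ IsConnected Ω ∧ IsCompact Ωᶜ ∧
    ∀ z ∈ frontier Ω,
      EuclideanCircle (connectedComponentIn (frontier Ω) z) ∨
        ∃ w : ℂ, connectedComponentIn (frontier Ω) z = {w}

/-!
The map `ζ ↦ a + (z - a) exp ζ` sends the imaginary axis onto the circle and is locally
biholomorphic, so it suffices to remove a vertical line `re ζ = c`. Cutting a rectangle along
that line leaves rectangles which meet the line only on their boundary; there Goursat's theorem
needs only continuity, so every rectangle integral vanishes and Morera's theorem applies.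
-/

namespace Complex

open scoped Interval

variable {E : Type*} [NormedAddCommGroup E] {f : ℂ → E} {z w : ℂ} {c : ℝ}

theorem rectangle_subset_rectangle {z' w' : ℂ} (hre : [[z'.re, w'.re]] ⊆ [[z.re, w.re]])
    (him : [[z'.im, w'.im]] ⊆ [[z.im, w.im]]) : Rectangle z' w' ⊆ Rectangle z w :=
  reProdIm_subset_iff.2 (Set.prod_mono hre him)

theorem intervalIntegrable_horizontal_of_continuousOn_rectangle
    (hcont : ContinuousOn f (Rectangle z w)) {y : ℝ} (hy : y ∈ [[z.im, w.im]]) :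
    IntervalIntegrable (fun x : ℝ ↦ f (x + y * I)) volume z.re w.re := by
  refine (hcont.comp (by fun_prop) fun x hx ↦ ?_).intervalIntegrable
  exact ⟨by simpa using hx, by simpa using hy⟩

variable [NormedSpace ℂ E]

theorem wedgeIntegral_add_wedgeIntegral_eq_add_of_mem_uIcc (hc : c ∈ [[z.re, w.re]])
    (hcont : ContinuousOn f (Rectangle z w)) :
    wedgeIntegral z w f + wedgeIntegral w z f =
      (wedgeIntegral z (c + w.im * I) f + wedgeIntegral (c + w.im * I) z f) +
        (wedgeIntegral (c + z.im * I) w f + wedgeIntegral w (c + z.im * I) f) := by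
  have bottom := intervalIntegrable_horizontal_of_continuousOn_rectangle hcont
    (left_mem_uIcc (a := z.im) (b := w.im))
  have top := intervalIntegrable_horizontal_of_continuousOn_rectangle hcont
    (right_mem_uIcc (a := z.im) (b := w.im))
  have hl : [[z.re, c]] ⊆ [[z.re, w.re]] := uIcc_subset_uIcc left_mem_uIcc hc
  have hr : [[c, w.re]] ⊆ [[z.re, w.re]] := uIcc_subset_uIcc hc right_mem_uIcc
  have hbottom := intervalIntegral.integral_add_adjacent_intervals
    (bottom.mono_set hl) (bottom.mono_set hr)
  have htop := intervalIntegral.integral_add_adjacent_intervals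
    (top.mono_set hl) (top.mono_set hr)
  simp only [wedgeIntegral, add_re, ofReal_re, mul_re, I_re, mul_zero, ofReal_im, I_im, mul_one,
    sub_self, add_zero, add_im, mul_im, zero_add]
  simp only [intervalIntegral.integral_symm z.re w.re, intervalIntegral.integral_symm z.re c,
    intervalIntegral.integral_symm c w.re, intervalIntegral.integral_symm z.im w.im, smul_neg]
  rw [← hbottom, ← htop]
  abel

theorem wedgeIntegral_add_wedgeIntegral_eq_zero_of_notMem_uIoo (hc : c ∉ uIoo z.re w.re)
    (hcont : ContinuousOn f (Rectangle z w))
    (hdiff : ∀ ζ ∈ Rectangle z w, ζ.re ≠ c → DifferentiableAt ℂ f ζ) :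
    wedgeIntegral z w f + wedgeIntegral w z f = 0 := by
  rw [wedgeIntegral_add_wedgeIntegral_eq]
  refine integral_boundary_rect_eq_zero_of_differentiable_on_off_countable f z w ∅
    countable_empty hcont fun ζ ⟨⟨hre, him⟩, _⟩ ↦ hdiff ζ ?_ ?_
  · exact ⟨Ioo_subset_Icc_self hre, Ioo_subset_Icc_self him⟩
  · rintro rfl
    exact hc hre

variable {U : Set ℂ}

theorem isConservativeOn_of_differentiableAt_of_re_ne (hcont : ContinuousOn f U)
    (hdiff : ∀ ζ ∈ U, ζ.re ≠ c → DifferentiableAt ℂ f ζ) : IsConservativeOn f U := by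
  intro z w hzw
  rw [← add_eq_zero_iff_eq_neg]
  have vanish : ∀ z' w', Rectangle z' w' ⊆ Rectangle z w → c ∉ uIoo z'.re w'.re →
      wedgeIntegral z' w' f + wedgeIntegral w' z' f = 0 := fun z' w' hsub hc ↦
    wedgeIntegral_add_wedgeIntegral_eq_zero_of_notMem_uIoo hc (hcont.mono (hsub.trans hzw))
      fun ζ hζ ↦ hdiff ζ (hzw (hsub hζ))
  by_cases hc : c ∈ [[z.re, w.re]]
  · rw [wedgeIntegral_add_wedgeIntegral_eq_add_of_mem_uIcc hc (hcont.mono hzw),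
      vanish _ _ ?_ (by simp), vanish _ _ ?_ (by simp), add_zero] <;>
      refine rectangle_subset_rectangle ?_ (by simp)
    · simpa using uIcc_subset_uIcc hc right_mem_uIcc
    · simpa using uIcc_subset_uIcc left_mem_uIcc hc
  · exact vanish z w subset_rfl fun h ↦ hc (uIoo_subset_uIcc_self h)

theorem differentiableOn_of_differentiableAt_of_re_ne [CompleteSpace E] (hU : IsOpen U)
    (hcont : ContinuousOn f U)
    (hdiff : ∀ ζ ∈ U, ζ.re ≠ c → DifferentiableAt ℂ f ζ) : DifferentiableOn ℂ f U :=
  (isConservativeOn_and_continuousOn_iff_isDifferentiableOn hU).1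
    ⟨isConservativeOn_of_differentiableAt_of_re_ne hcont hdiff, hcont⟩

theorem differentiableAt_of_differentiableAt_comp_exp {a b : ℂ} (hb : b ≠ 0)
    (h : DifferentiableAt ℂ (fun ζ ↦ f (a + b * exp ζ)) 0) : DifferentiableAt ℂ f (a + b) := by
  have hlog : DifferentiableAt ℂ (fun w ↦ log ((w - a) / b)) (a + b) := by
    refine ((differentiableAt_id.sub_const a).div_const b).clog ?_
    simp [hb, one_mem_slitPlane]
  have hcomp := (show DifferentiableAt ℂ (fun ζ ↦ f (a + b * exp ζ)) (log ((a + b - a) / b)) by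
    simpa [hb] using h).comp (a + b) hlog
  refine hcomp.congr_of_eventuallyEq ?_
  filter_upwards [isOpen_ne.mem_nhds (show a + b ≠ a by simpa using hb)] with w hw
  simp [exp_log (div_ne_zero (sub_ne_zero.2 hw) hb), mul_div_cancel₀ _ hb]

end Complex

/-- Morera-type removability of a circle: a continuous function on an open
set which is complex differentiable off a Euclidean circle is differentiable everywhere. -/
theorem differentiable_of_continuous_off_circle (U : Set ℂ) (hU : IsOpen U)
    (a : ℂ) (r : ℝ) (hr : 0 < r) (f : ℂ → ℂ) (hcont : ContinuousOn f U)
    (hdiff : ∀ z ∈ U \ {z : ℂ | ‖z - a‖ = r}, DifferentiableAt ℂ f z) :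
    ∀ z ∈ U, DifferentiableAt ℂ f z := by
  intro z hz
  by_cases hcirc : ‖z - a‖ = r
  swap
  · exact hdiff z ⟨hz, hcirc⟩
  have hb : z - a ≠ 0 := norm_ne_zero_iff.1 (hcirc ▸ hr.ne')
  set φ : ℂ → ℂ := fun ζ ↦ a + (z - a) * Complex.exp ζ
  have hφ : Differentiable ℂ φ := by fun_prop
  have hV : IsOpen (φ ⁻¹' U) := hU.preimage hφ.continuous
  have hline : ∀ ζ ∈ φ ⁻¹' U, ζ.re ≠ 0 → DifferentiableAt ℂ (f ∘ φ) ζ := by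
    refine fun ζ hζ hre ↦ (hdiff _ ⟨hζ, ?_⟩).comp ζ (hφ ζ)
    simpa [φ, Complex.norm_exp, hcirc, hr.ne'] using hre
  have hzero : (0 : ℂ) ∈ φ ⁻¹' U := by simpa [φ] using hz
  have hcomp := Complex.differentiableOn_of_differentiableAt_of_re_ne hV
    (hcont.comp hφ.continuous.continuousOn (mapsTo_preimage _ _)) hline
  simpa using Complex.differentiableAt_of_differentiableAt_comp_exp hb
    ((hcomp 0 hzero).differentiableAt (hV.mem_nhds hzero))
end

section
/- Let a ∈ ℂ and r > 0, and let R : ℂ \ {a} → ℂ be the reflection across the circle {z : |z − a| = r}, given by R(z) = a + r² / conj(z − a). Then R is area-decreasing on the closed exterior of the circle: for every measurable set E ⊆ {z ∈ ℂ : |z − a| ≥ r}, the two-dimensional Lebesgue measure of R(E) is at most the two-dimensional Lebesgue measure of E. -/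
/-
Off the centre, `R = a + conj ∘ g` with `g z = r² / (z - a)` holomorphic, so the real Jacobian of
`R` at `z` is `-|g'(z)|² = -r⁴ / |z - a|⁴`, of absolute value at most `1` where `|z - a| ≥ r`.
The change-of-variables inequality `μ (f '' s) ≤ ∫⁻ x in s, |det f'(x)| ∂μ` then bounds the area
of the image by the area of `E`, after replacing `E` by a measurable hull of it inside the
exterior.
-/

open Set Metric MeasureTheory

section AddHaar

variable {F : Type*} [NormedAddCommGroup F] [NormedSpace ℝ F] [FiniteDimensional ℝ F]
  [MeasurableSpace F] [BorelSpace F] (μ : Measure F) [μ.IsAddHaarMeasure]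

theorem addHaar_image_le_of_abs_det_le_one {f : F → F} {f' : F → F →L[ℝ] F} {s t : Set F}
    (ht : MeasurableSet t) (hst : s ⊆ t) (hf' : ∀ x ∈ t, HasFDerivWithinAt f (f' x) t x)
    (hdet : ∀ x ∈ t, |(f' x).det| ≤ 1) : μ (f '' s) ≤ μ s := by
  set u := toMeasurable μ s ∩ t
  have hu : MeasurableSet u := (measurableSet_toMeasurable μ s).inter ht
  have hsu : s ⊆ u := subset_inter (subset_toMeasurable μ s) hst
  calc μ (f '' s) ≤ μ (f '' u) := measure_mono (image_mono hsu)
    _ ≤ ∫⁻ x in u, ENNReal.ofReal |(f' x).det| ∂μ :=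
      addHaar_image_le_lintegral_abs_det_fderiv μ hu
        fun x hx => (hf' x hx.2).mono inter_subset_right
    _ ≤ ∫⁻ _ in u, 1 ∂μ :=
      setLIntegral_mono measurable_const fun x hx => ENNReal.ofReal_le_one.mpr (hdet x hx.2)
    _ = μ u := setLIntegral_one u
    _ ≤ μ s := (measure_mono inter_subset_left).trans (measure_toMeasurable s).le

end AddHaar

theorem Complex.det_conjCLE_comp_mul (c : ℂ) :
    (Complex.conjCLE.toContinuousLinearMap.comp
      ((ContinuousLinearMap.smulRight (1 : ℂ →L[ℂ] ℂ) c).restrictScalars ℝ)).det =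
      -Complex.normSq c := by
  have h : ((Complex.conjCLE.toContinuousLinearMap.comp
      ((ContinuousLinearMap.smulRight (1 : ℂ →L[ℂ] ℂ) c).restrictScalars ℝ)) : ℂ →ₗ[ℝ] ℂ) =
      Complex.conjAe.toLinearMap ∘ₗ Algebra.lmul ℝ ℂ c := by
    ext z
    simp [mul_comm]
  rw [ContinuousLinearMap.det, h, LinearMap.det_comp, Complex.det_conjAe, ← Algebra.norm_apply,
    Algebra.norm_complex_apply]
  ring

theorem HasDerivAt.hasFDerivAt_conj {g : ℂ → ℂ} {g' z : ℂ} (hg : HasDerivAt g g' z) :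
    HasFDerivAt (fun w => starRingEnd ℂ (g w)) (Complex.conjCLE.toContinuousLinearMap.comp
      ((ContinuousLinearMap.smulRight (1 : ℂ →L[ℂ] ℂ) g').restrictScalars ℝ)) z :=
  Complex.conjCLE.toContinuousLinearMap.hasFDerivAt.comp z (hg.hasFDerivAt.restrictScalars ℝ)

noncomputable def circleReflection (a : ℂ) (r : ℝ) (z : ℂ) : ℂ :=
  a + (r : ℂ) ^ 2 / starRingEnd ℂ (z - a)

theorem circleReflection_eq_add_conj (a : ℂ) (r : ℝ) :
    circleReflection a r = fun z => a + starRingEnd ℂ ((r : ℂ) ^ 2 / (z - a)) := by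
  funext z
  rw [circleReflection, map_div₀, map_pow, Complex.conj_ofReal]

theorem hasFDerivAt_circleReflection (a : ℂ) (r : ℝ) {z : ℂ} (hz : z ≠ a) :
    HasFDerivAt (circleReflection a r) (Complex.conjCLE.toContinuousLinearMap.comp
      ((ContinuousLinearMap.smulRight (1 : ℂ →L[ℂ] ℂ)
        (-(r : ℂ) ^ 2 / (z - a) ^ 2)).restrictScalars ℝ)) z := by
  have hg : HasDerivAt (fun w : ℂ => (r : ℂ) ^ 2 / (w - a)) (-(r : ℂ) ^ 2 / (z - a) ^ 2) z := by
    simpa [div_eq_mul_inv, neg_div] using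
      (((hasDerivAt_id z).sub_const a).inv (sub_ne_zero.mpr hz)).const_mul ((r : ℂ) ^ 2)
  rw [circleReflection_eq_add_conj]
  exact hg.hasFDerivAt_conj.const_add a

theorem abs_det_fderiv_circleReflection_le_one (a : ℂ) {r : ℝ} (hr : 0 < r) {z : ℂ}
    (hz : r ≤ ‖z - a‖) : |(fderiv ℝ (circleReflection a r) z).det| ≤ 1 := by
  have hza : 0 < ‖z - a‖ := hr.trans_le hz
  rw [(hasFDerivAt_circleReflection a r (sub_ne_zero.mp (norm_pos_iff.mp hza))).fderiv,
    Complex.det_conjCLE_comp_mul, abs_neg, abs_of_nonneg (Complex.normSq_nonneg _),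
    Complex.normSq_eq_norm_sq]
  have hnorm : ‖-(r : ℂ) ^ 2 / (z - a) ^ 2‖ = r ^ 2 / ‖z - a‖ ^ 2 := by
    simp [abs_of_pos hr]
  rw [hnorm, div_pow, div_le_one (by positivity)]
  gcongr

theorem reflection_area_decreasing_general (a : ℂ) (r : ℝ) (hr : 0 < r)
    (E : Set ℂ)
    (hEsub : E ⊆ {z : ℂ | r ≤ ‖z - a‖}) :
    volume ((fun z : ℂ => a + (r : ℂ) ^ 2 / (starRingEnd ℂ) (z - a)) '' E) ≤ volume E := by
  show volume (circleReflection a r '' E) ≤ volume E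
  have hne : ∀ z ∈ {z : ℂ | r ≤ ‖z - a‖}, z ≠ a := fun z hz =>
    sub_ne_zero.mp (norm_pos_iff.mp (hr.trans_le hz))
  exact addHaar_image_le_of_abs_det_le_one volume
    (measurableSet_le measurable_const (by fun_prop)) hEsub
    (fun z hz => (hasFDerivAt_circleReflection a r (hne z hz)).differentiableAt.hasFDerivAt
      |>.hasFDerivWithinAt)
    (fun z hz => abs_det_fderiv_circleReflection_le_one a hr hz)

/-- The reflection `R(z) = a + r²/conj(z - a)` across the circle of center
`a` and radius `r` is area-decreasing on the closed exterior of the circle. -/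
theorem reflection_area_decreasing (a : ℂ) (r : ℝ) (hr : 0 < r)
    (E : Set ℂ) (hE : MeasurableSet E)
    (hEsub : E ⊆ {z : ℂ | r ≤ ‖z - a‖}) :
    volume ((fun z : ℂ => a + (r : ℂ) ^ 2 / (starRingEnd ℂ) (z - a)) '' E) ≤ volume E :=
  reflection_area_decreasing_general a r hr E hEsub
end

section
/- There exists a nonempty compact set K ⊂ ℂ with the following properties: (1) every connected component of K is either a Euclidean circle or a singleton; (2) for every z ∈ K and every ε > 0, there are infinitely many pairwise distinct Euclidean circles contained in K that intersect the open disk of center z and radius ε (i.e., every point of K is an accumulation point of infinitely many circles of K); and consequently (3) K cannot be written as a countable union of sets each of which is a Euclidean circle, a Cantor set, or a singleton. -/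
open Set Metric MeasureTheory

/-! Take a Cantor set `R ⊆ (0, ∞)` and let `K` be the union of the circles about `0` with radii
in `R`. As `R` is totally disconnected, these circles are the components of `K`; as `R` has no
isolated points, each of them is a limit of others. If `K` were a countable union of circles,
Cantor sets and points, Baire's theorem would give one piece containing a relatively open subset
of `K`. Such a subset contains an arc, which a totally disconnected piece cannot contain, and
points of two different moduli, which a circle inside `K` cannot contain since it lies in a single
component of `K`. -/

open Filter Topology Function

instance Pi.perfectSpace {ι : Type*} {β : ι → Type*} [∀ i, TopologicalSpace (β i)]
    [Infinite ι] [∀ i, Nontrivial (β i)] : PerfectSpace (∀ i, β i) := by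
  classical
  refine perfectSpace_iff_forall_not_isolated.2 fun x => ?_
  choose y hy using fun i => exists_ne (x i)
  have hupdate : Tendsto (fun i => update x i (y i)) cofinite (𝓝[≠] x) := by
    refine tendsto_nhdsWithin_iff.2 ⟨tendsto_pi_nhds.2 fun j => ?_, .of_forall fun i h => ?_⟩
    · refine tendsto_const_nhds.congr' ?_
      filter_upwards [eventually_cofinite_ne j] with i hij using (update_of_ne hij.symm _ _).symm
    · exact hy i (by simpa using congrFun h i)
  exact hupdate.neBot

theorem preperfect_range_of_continuous_of_injective {X Y : Type*} [TopologicalSpace X]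
    [PerfectSpace X] [TopologicalSpace Y] {f : X → Y} (hf : Continuous f) (hinj : Injective f) :
    Preperfect (range f) := by
  rintro _ ⟨x, rfl⟩
  simpa using (PerfectSpace.univ_preperfect x trivial).map hf.continuousAt hinj

theorem exists_cantor_subset_Ioi_zero :
    ∃ R : Set ℝ, R.Nonempty ∧ IsCompact R ∧ Preperfect R ∧ IsTotallyDisconnected R ∧
      R ⊆ Ioi 0 := by
  have hIcc : Perfect (Icc (1 : ℝ) 2) :=
    ⟨isClosed_Icc,
      isPreconnected_Icc.preperfect_of_nontrivial ⟨1, by norm_num, 2, by norm_num⟩⟩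
  obtain ⟨f, hfIcc, hf, hinj⟩ := hIcc.exists_nat_bool_injection (nonempty_Icc.2 (by norm_num))
  exact ⟨range f, range_nonempty f, isCompact_range hf,
    preperfect_range_of_continuous_of_injective hf hinj,
    (hf.isClosedEmbedding hinj).isEmbedding.isTotallyDisconnected_range.2 inferInstance,
    fun r hr => lt_of_lt_of_le one_pos (hfIcc hr).1⟩

theorem euclideanCircle_iff_eq_sphere {S : Set ℂ} :
    EuclideanCircle S ↔ ∃ (a : ℂ) (r : ℝ), 0 < r ∧ S = sphere a r := by
  simp only [EuclideanCircle, ← mem_sphere_iff_norm, ofPred_mem_eq]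

theorem euclideanCircle_sphere (a : ℂ) {r : ℝ} (hr : 0 < r) : EuclideanCircle (sphere a r) :=
  euclideanCircle_iff_eq_sphere.2 ⟨a, r, hr, rfl⟩

theorem EuclideanCircle.isClosed {S : Set ℂ} (hS : EuclideanCircle S) : IsClosed S := by
  obtain ⟨a, r, -, rfl⟩ := euclideanCircle_iff_eq_sphere.1 hS
  exact isClosed_sphere

theorem EuclideanCircle.isPreconnected {S : Set ℂ} (hS : EuclideanCircle S) :
    IsPreconnected S := by
  obtain ⟨a, r, hr, rfl⟩ := euclideanCircle_iff_eq_sphere.1 hS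
  exact (isConnected_sphere (by simp [Complex.rank_real_complex]) a hr.le).isPreconnected

theorem exists_nontrivial_isPreconnected_subset_sphere_inter_ball {z : ℂ} (hz : z ≠ 0)
    {ε : ℝ} (hε : 0 < ε) : ∃ P : Set ℂ, P.Nontrivial ∧ IsPreconnected P ∧
      P ⊆ sphere 0 ‖z‖ ∩ ball z ε := by
  set γ : ℝ → ℂ := fun t => z * Complex.exp (t * Complex.I)
  have hγ : Continuous γ := by fun_prop
  obtain ⟨δ, hδ, hδε⟩ := Metric.isOpen_iff.1 (isOpen_ball.preimage hγ) 0
    (show (0 : ℝ) ∈ γ ⁻¹' ball z ε by simpa [γ] using hε)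
  -- capping at `1` keeps `η / 2 < π`, so that `γ (η / 2) ≠ γ 0`
  set η := min δ 1
  have hη : 0 < η := lt_min hδ one_pos
  have hγη : γ (η / 2) ≠ z := fun h => by
    have h1 : Complex.exp (↑(η / 2) * Complex.I) = 1 :=
      mul_left_cancel₀ hz (by rw [mul_one]; exact h)
    have h2 := congrArg Complex.im h1
    rw [Complex.exp_ofReal_mul_I_im, Complex.one_im] at h2
    refine (Real.sin_pos_of_pos_of_lt_pi (by positivity) ?_).ne' h2
    linarith [min_le_right δ 1, Real.pi_gt_three]
  refine ⟨γ '' ball 0 η, ⟨γ 0, mem_image_of_mem _ (mem_ball_self hη), γ (η / 2),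
    mem_image_of_mem _ ?_, by simpa [γ] using hγη.symm⟩,
    (convex_ball 0 η).isPreconnected.image _ hγ.continuousOn, ?_⟩
  · rw [mem_ball, Real.dist_0_eq_abs, abs_of_pos (half_pos hη)]
    exact half_lt_self hη
  · rintro _ ⟨t, ht, rfl⟩
    exact ⟨by simp [γ, Complex.norm_exp_ofReal_mul_I],
      hδε (ball_subset_ball (min_le_left δ 1) ht)⟩

theorem IsClosed.exists_inter_ball_subset_of_eq_iUnion {X ι : Type*} [PseudoMetricSpace X]
    [CompleteSpace X] [Countable ι] {K : Set X} (hK : IsClosed K) (hne : K.Nonempty)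
    {S : ι → Set X} (hS : ∀ i, IsClosed (S i)) (hKS : K = ⋃ i, S i) :
    ∃ i, ∃ z ∈ K, ∃ ε > 0, K ∩ ball z ε ⊆ S i := by
  have : CompleteSpace K := hK.completeSpace_coe
  have : Nonempty K := hne.to_subtype
  obtain ⟨i, z, hz⟩ := nonempty_interior_of_iUnion_of_closed
    (fun i => (hS i).preimage continuous_subtype_val)
    (eq_univ_of_forall fun z : K => by simpa using hKS.subset z.2)
  obtain ⟨ε, hε, hball⟩ := Metric.mem_nhds_iff.1 (mem_interior_iff_mem_nhds.1 hz)
  exact ⟨i, z, z.2, ε, hε,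
    fun w ⟨hwK, hw⟩ => hball (show (⟨w, hwK⟩ : K) ∈ ball z ε from hw)⟩

section PreimageNorm

variable {E : Type*} [NormedAddCommGroup E] {R : Set ℝ}

theorem IsTotallyDisconnected.norm_eq_of_isPreconnected (hR : IsTotallyDisconnected R)
    {P : Set E} (hP : IsPreconnected P) (hPR : P ⊆ norm ⁻¹' R) {x y : E} (hx : x ∈ P)
    (hy : y ∈ P) : ‖x‖ = ‖y‖ :=
  hR _ (image_subset_iff.2 hPR) (hP.image _ continuous_norm.continuousOn)
    (mem_image_of_mem _ hx) (mem_image_of_mem _ hy)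

theorem IsCompact.preimage_norm [ProperSpace E] (hR : IsCompact R) :
    IsCompact (norm ⁻¹' R : Set E) := by
  obtain ⟨M, hM⟩ := hR.isBounded.exists_norm_le
  refine isCompact_of_isClosed_isBounded (hR.isClosed.preimage continuous_norm) ?_
  exact isBounded_iff_forall_norm_le.2 ⟨M, fun z hz => by simpa using hM _ hz⟩

variable [NormedSpace ℝ E]

theorem connectedComponentIn_preimage_norm (hE : 1 < Module.rank ℝ E)
    (hR : IsTotallyDisconnected R) {z : E} (hz : ‖z‖ ∈ R) :
    connectedComponentIn (norm ⁻¹' R) z = sphere 0 ‖z‖ := by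
  refine Subset.antisymm (fun w hw => ?_) ?_
  · exact mem_sphere_zero_iff_norm.2 <| hR.norm_eq_of_isPreconnected
      isPreconnected_connectedComponentIn (connectedComponentIn_subset _ _) hw
      (mem_connectedComponentIn hz)
  · refine (isConnected_sphere hE 0 (norm_nonneg z)).isPreconnected.subset_connectedComponentIn
      (by simp) fun w hw => ?_
    rwa [mem_preimage, mem_sphere_zero_iff_norm.1 hw]

theorem preimage_norm_nonempty [Nontrivial E] (hR : R.Nonempty) (hR0 : R ⊆ Ici 0) :
    (norm ⁻¹' R : Set E).Nonempty := by
  obtain ⟨r, hr⟩ := hR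
  obtain ⟨w, hw⟩ := NormedSpace.sphere_nonempty (x := (0 : E)).2 (hR0 hr)
  exact ⟨w, by rwa [mem_preimage, mem_sphere_zero_iff_norm.1 hw]⟩

theorem sphere_zero_inter_ball_nonempty {z : E} (hz : z ≠ 0) {s ε : ℝ} (hs : 0 ≤ s)
    (hsz : dist s ‖z‖ < ε) : (sphere (0 : E) s ∩ ball z ε).Nonempty := by
  have hz' : 0 < ‖z‖ := norm_pos_iff.2 hz
  refine ⟨(s / ‖z‖) • z, ?_, ?_⟩
  · simp [norm_smul, abs_of_nonneg hs, hz'.ne']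
  · calc dist ((s / ‖z‖) • z) z = |s / ‖z‖ - 1| * ‖z‖ := by
          rw [dist_eq_norm, ← Real.norm_eq_abs, ← norm_smul, sub_smul, one_smul]
      _ = dist s ‖z‖ := by
          rw [Real.dist_eq, ← abs_of_pos hz', ← abs_mul, abs_of_pos hz']
          field_simp
      _ < ε := hsz

theorem infinite_setOf_euclideanCircle_subset_preimage_norm (hR : Preperfect R)
    (hR0 : R ⊆ Ioi 0) {z : ℂ} (hz : ‖z‖ ∈ R) {ε : ℝ} (hε : 0 < ε) :
    {C : Set ℂ | EuclideanCircle C ∧ C ⊆ norm ⁻¹' R ∧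
      (C ∩ ball z ε).Nonempty}.Infinite := by
  have hz0 : z ≠ 0 := norm_pos_iff.1 (hR0 hz)
  have hinf : (ball ‖z‖ ε ∩ R).Infinite :=
    .of_accPt ((hR _ hz).nhds_inter (ball_mem_nhds _ hε))
  have hinj : InjOn (sphere (0 : ℂ)) (ball ‖z‖ ε ∩ R) := fun s hs t _ hst => by
    obtain ⟨w, hw⟩ := NormedSpace.sphere_nonempty (x := (0 : ℂ)).2 (hR0 hs.2).le
    have hw' : w ∈ sphere 0 t := hst ▸ hw
    rw [mem_sphere_zero_iff_norm] at hw hw'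
    rw [← hw, hw']
  refine (hinf.image hinj).mono ?_
  rintro _ ⟨s, ⟨hsz, hs⟩, rfl⟩
  refine ⟨euclideanCircle_sphere 0 (hR0 hs), fun w hw => ?_,
    sphere_zero_inter_ball_nonempty hz0 (hR0 hs).le hsz⟩
  rwa [mem_preimage, mem_sphere_zero_iff_norm.1 hw]

theorem not_exists_iUnion_eq_preimage_norm (hRc : IsCompact R) (hRne : R.Nonempty)
    (hRp : Preperfect R) (hRd : IsTotallyDisconnected R) (hR0 : R ⊆ Ioi 0) :
    ¬ ∃ S : ℕ → Set ℂ, norm ⁻¹' R = (⋃ n, S n) ∧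
        ∀ n, EuclideanCircle (S n) ∨ IsCantorSet (S n) ∨ ∃ w : ℂ, S n = {w} := by
  rintro ⟨S, hKS, hS⟩
  have hSc : ∀ n, IsClosed (S n) := fun n => by
    rcases hS n with hC | hC | ⟨w, hw⟩
    · exact hC.isClosed
    · exact hC.2.1.isClosed
    · exact hw ▸ isClosed_singleton
  obtain ⟨n, z, hz, ε, hε, hsub⟩ :=
    (hRc.isClosed.preimage continuous_norm).exists_inter_ball_subset_of_eq_iUnion
      (preimage_norm_nonempty hRne (hR0.trans Ioi_subset_Ici_self)) hSc hKS
  have hz0 : z ≠ 0 := norm_pos_iff.1 (hR0 hz)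
  have hzS : z ∈ S n := hsub ⟨hz, mem_ball_self hε⟩
  obtain hC | htd : EuclideanCircle (S n) ∨ IsTotallyDisconnected (S n) := by
    rcases hS n with hC | hC | ⟨w, hw⟩
    exacts [.inl hC, .inr hC.2.2.2, .inr (hw ▸ isTotallyDisconnected_singleton)]
  · obtain ⟨s, ⟨hsz, hs⟩, hsne⟩ := accPt_iff_nhds.1 (hRp _ hz) _ (ball_mem_nhds _ hε)
    obtain ⟨w, hws, hwz⟩ := sphere_zero_inter_ball_nonempty hz0 (hR0 hs).le hsz
    rw [mem_sphere_zero_iff_norm] at hws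
    have hwS : w ∈ S n := hsub ⟨by rwa [mem_preimage, hws], hwz⟩
    exact hsne (hws ▸ hRd.norm_eq_of_isPreconnected hC.isPreconnected
      (hKS ▸ subset_iUnion S n) hwS hzS)
  · obtain ⟨P, hPnt, hP, hPsub⟩ :=
      exists_nontrivial_isPreconnected_subset_sphere_inter_ball hz0 hε
    refine hPnt.not_subsingleton (htd P (fun w hw => hsub ⟨?_, (hPsub hw).2⟩) hP)
    rw [mem_preimage, mem_sphere_zero_iff_norm.1 (hPsub hw).1]
    exact hz

end PreimageNorm

/-- There is a nonempty compact set `K ⊆ ℂ` whose connected components are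
circles or points, such that every point of `K` is an accumulation point of infinitely
many circles of `K`; consequently `K` is not a countable union of circles, Cantor sets
and singletons. -/
theorem exists_compact_circles_accumulating :
    ∃ K : Set ℂ, K.Nonempty ∧ IsCompact K ∧
      (∀ z ∈ K, EuclideanCircle (connectedComponentIn K z) ∨
        ∃ w : ℂ, connectedComponentIn K z = {w}) ∧
      (∀ z ∈ K, ∀ ε > 0,
        {C : Set ℂ | EuclideanCircle C ∧ C ⊆ K ∧ (C ∩ Metric.ball z ε).Nonempty}.Infinite) ∧
      ¬ ∃ S : ℕ → Set ℂ, K = (⋃ n, S n) ∧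
        ∀ n, EuclideanCircle (S n) ∨ IsCantorSet (S n) ∨ ∃ w : ℂ, S n = {w} := by
  obtain ⟨R, hRne, hRc, hRp, hRd, hR0⟩ := exists_cantor_subset_Ioi_zero
  refine ⟨norm ⁻¹' R, preimage_norm_nonempty hRne (hR0.trans Ioi_subset_Ici_self),
    hRc.preimage_norm, fun z hz => Or.inl ?_,
    fun z hz ε hε => infinite_setOf_euclideanCircle_subset_preimage_norm hRp hR0 hz hε,
    not_exists_iUnion_eq_preimage_norm hRc hRne hRp hRd hR0⟩
  rw [connectedComponentIn_preimage_norm (by simp [Complex.rank_real_complex]) hRd hz]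
  exact euclideanCircle_sphere 0 (hR0 hz)
end
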